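/- arXiv:2408.00034 — 3 statements merged into one kernel-verified Lean document; each statement's English description precedes it below -/
import Mathlib

section
/- For a positive operator $T$ on $L^p$ with $p\in(1,\infty)$ and an at most countable collection $\mathcal{C}$ of subsets of $\Omega$, the future of the union of the elements of $\mathcal{C}$ equals the union of the futures: $\mathcal{F}\big(\bigcup_{A\in\mathcal{C}} A\big) = \bigcup_{A\in\mathcal{C}} \mathcal{F}(A)$. -/
open MeasureTheory ENNReal

variable {Ω : Type*} [MeasurableSpace Ω]

/-- A.e. inclusion of sets. -/
def AESub (μ : Measure Ω) (A B : Set Ω) : Prop := μ (A \ B) = 0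

/-- A.e. equality of sets. -/
def AESetEq (μ : Measure Ω) (A B : Set Ω) : Prop := μ (symmDiff A B) = 0

/-- A positive operator on `L^p`. -/
def IsPositiveOp {p : ℝ≥0∞} [Fact (1 ≤ p)] (μ : Measure Ω)
    (T : Lp ℝ p μ →L[ℝ] Lp ℝ p μ) : Prop :=
  ∀ f : Lp ℝ p μ, 0 ≤ f → 0 ≤ T f

/-- A measurable set `A` is `T`-invariant: `M_{Aᶜ} T M_A = 0`. -/
def IsInvariantSet {p : ℝ≥0∞} [Fact (1 ≤ p)] (μ : Measure Ω)
    (T : Lp ℝ p μ →L[ℝ] Lp ℝ p μ) (A : Set Ω) : Prop :=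
  MeasurableSet A ∧
    ∀ f : Lp ℝ p μ, (∀ᵐ x ∂μ, x ∉ A → f x = 0) → ∀ᵐ x ∂μ, x ∉ A → (T f) x = 0

/-- `FA` is the future of `A`: the smallest invariant set containing `A`, up to null sets. -/
def IsFutureOf {p : ℝ≥0∞} [Fact (1 ≤ p)] (μ : Measure Ω)
    (T : Lp ℝ p μ →L[ℝ] Lp ℝ p μ) (A FA : Set Ω) : Prop :=
  IsInvariantSet μ T FA ∧ AESub μ A FA ∧
    ∀ B, IsInvariantSet μ T B → AESub μ A B → AESub μ FA B

open Filter Topology Set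

/-- The empty set is invariant. -/
lemma isInvariantSet_empty {μ : Measure Ω} {p : ℝ≥0∞} [Fact (1 ≤ p)]
    (T : Lp ℝ p μ →L[ℝ] Lp ℝ p μ) : IsInvariantSet μ T (∅ : Set Ω) := by
  refine ⟨MeasurableSet.empty, fun f hf => ?_⟩
  have hf' : f = 0 := by
    apply Lp.ext
    filter_upwards [hf, Lp.coeFn_zero ℝ p μ] with x hx h0
    rw [hx (notMem_empty x)]
    exact (h0.trans rfl).symm
  rw [hf', map_zero]
  filter_upwards [Lp.coeFn_zero ℝ p μ] with x h0 _
  exact h0.trans rfl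

/-- Invariant sets are closed under countable (ℕ-indexed) unions, for `p ∈ (0, ∞)`. -/
lemma isInvariantSet_iUnion {μ : Measure Ω} {p : ℝ≥0∞} [Fact (1 ≤ p)]
    (hp0 : p ≠ 0) (hp2 : p ≠ ∞)
    (T : Lp ℝ p μ →L[ℝ] Lp ℝ p μ) (S : ℕ → Set Ω)
    (hS : ∀ n, IsInvariantSet μ T (S n)) :
    IsInvariantSet μ T (⋃ n, S n) := by
  set U := ⋃ n, S n with hUdef
  have hUm : MeasurableSet U := MeasurableSet.iUnion fun n => (hS n).1
  refine ⟨hUm, fun f hf => ?_⟩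
  set Un : ℕ → Set Ω := Set.accumulate S with hUndef
  have hUnm : ∀ n, MeasurableSet (Un n) := by
    intro n
    apply MeasurableSet.biUnion (Set.to_countable _)
    exact fun k _ => (hS k).1
  have hUnU : ∀ n, Un n ⊆ U := fun n => Set.accumulate_subset_iUnion n
  have hSU : ∀ n, S n ⊆ U := fun n => Set.subset_iUnion S n
  -- Claim 1: if `g` is supported (a.e.) in `Un n`, then `T g = 0` a.e. off `U`.
  have claim1 : ∀ n, ∀ g : Lp ℝ p μ, (∀ᵐ x ∂μ, x ∉ Un n → g x = 0) →
      ∀ᵐ x ∂μ, x ∉ U → (T g) x = 0 := by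
    intro n
    induction n with
    | zero =>
        intro g hg
        have h0 : Un 0 = S 0 := by
          ext x
          simp [hUndef, Set.mem_accumulate, Nat.le_zero]
        rw [h0] at hg
        filter_upwards [(hS 0).2 g hg] with x hx hxU
        exact hx fun h => hxU (hSU 0 h)
    | succ n ih =>
        intro g hg
        have hsucc : Un (n + 1) = Un n ∪ S (n + 1) := by
          ext x
          simp only [hUndef, Set.mem_accumulate, Set.mem_union, Nat.le_add_one_iff]
          constructor
          · rintro ⟨y, hy | rfl, hx⟩
            · exact Or.inl ⟨y, hy, hx⟩
            · exact Or.inr hx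
          · rintro (⟨y, hy, hx⟩ | hx)
            · exact ⟨y, Or.inl hy, hx⟩
            · exact ⟨n + 1, Or.inr rfl, hx⟩
        set D := Un (n + 1) \ Un n with hDdef
        have hDm : MeasurableSet D := (hUnm (n + 1)).diff (hUnm n)
        have hDS : D ⊆ S (n + 1) := by
          intro x hx
          rcases (hsucc ▸ hx.1) with h | h
          · exact absurd h hx.2
          · exact h
        have hmono : Un n ⊆ Un (n + 1) := Set.monotone_accumulate (Nat.le_succ n)
        set g1 : Lp ℝ p μ := MemLp.toLp _ (MemLp.indicator (hUnm n) (Lp.memLp g)) with hg1def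
        set g2 : Lp ℝ p μ := MemLp.toLp _ (MemLp.indicator hDm (Lp.memLp g)) with hg2def
        have hc1 : g1 =ᵐ[μ] (Un n).indicator g := MemLp.coeFn_toLp _
        have hc2 : g2 =ᵐ[μ] D.indicator g := MemLp.coeFn_toLp _
        have hgsum : g = g1 + g2 := by
          apply Lp.ext
          filter_upwards [hg, Lp.coeFn_add g1 g2, hc1, hc2] with x hx hadd h1 h2
          rw [hadd]
          simp only [Pi.add_apply, h1, h2]
          by_cases hx1 : x ∈ Un n
          · have hx2 : x ∉ D := fun h => h.2 hx1
            rw [Set.indicator_of_mem hx1, Set.indicator_of_notMem hx2, add_zero]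
          · by_cases hx3 : x ∈ Un (n + 1)
            · have hx2 : x ∈ D := ⟨hx3, hx1⟩
              rw [Set.indicator_of_notMem hx1, Set.indicator_of_mem hx2, zero_add]
            · rw [Set.indicator_of_notMem hx1,
                Set.indicator_of_notMem (fun h : x ∈ D => hx3 h.1), hx hx3, add_zero]
        have hTg1 : ∀ᵐ x ∂μ, x ∉ U → (T g1) x = 0 := by
          apply ih
          filter_upwards [hc1] with x h1 hx
          rw [h1, Set.indicator_of_notMem hx]
        have hTg2 : ∀ᵐ x ∂μ, x ∉ U → (T g2) x = 0 := by
          have h2 : ∀ᵐ x ∂μ, x ∉ S (n + 1) → g2 x = 0 := by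
            filter_upwards [hc2] with x h2 hx
            rw [h2, Set.indicator_of_notMem (fun h => hx (hDS h))]
          filter_upwards [(hS (n + 1)).2 g2 h2] with x hx hxU
          exact hx fun h => hxU (hSU (n + 1) h)
        have hTsum : T g = T g1 + T g2 := by rw [hgsum, map_add]
        filter_upwards [hTg1, hTg2, Lp.coeFn_add (T g1) (T g2)] with x h1 h2 hadd hxU
        have : (T g) x = (T g1) x + (T g2) x := by
          rw [hTsum, hadd]; rfl
        rw [this, h1 hxU, h2 hxU, add_zero]
  -- Step B: approximate `f` by its truncations on `Un n`.
  set q : ℝ := p.toReal with hqdef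
  have hq : 0 < q := ENNReal.toReal_pos hp0 hp2
  set fn : ℕ → Lp ℝ p μ :=
    fun n => MemLp.toLp _ (MemLp.indicator (hUnm n) (Lp.memLp f)) with hfndef
  have hcfn : ∀ n, fn n =ᵐ[μ] (Un n).indicator f := fun n => MemLp.coeFn_toLp _
  have hTfn : ∀ n, ∀ᵐ x ∂μ, x ∉ U → (T (fn n)) x = 0 := by
    intro n
    apply claim1 n
    filter_upwards [hcfn n] with x h1 hx
    rw [h1, Set.indicator_of_notMem hx]
  -- the density measure
  set G : Ω → ℝ≥0∞ := fun x => (‖f x‖₊ : ℝ≥0∞) ^ q with hGdef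
  set ν : Measure Ω := μ.withDensity G with hνdef
  have hνfin : ν Set.univ ≠ ∞ := by
    rw [hνdef, withDensity_apply _ MeasurableSet.univ, Measure.restrict_univ]
    exact (lintegral_rpow_enorm_lt_top_of_eLpNorm_lt_top hp0 hp2 (Lp.eLpNorm_lt_top f)).ne
  -- the sets `U \ Un n` decrease to `∅` in `ν`-measure
  have hνtend : Tendsto (fun n => ν (U \ Un n)) atTop (𝓝 0) := by
    have hAnti : Antitone fun n => U \ Un n := fun m n hmn =>
      Set.diff_subset_diff_right (Set.monotone_accumulate hmn)
    have h1 := tendsto_measure_iInter_atTop (μ := ν)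
      (fun n => ((hUm.diff (hUnm n)).nullMeasurableSet)) hAnti
      ⟨0, ne_top_of_le_ne_top hνfin (measure_mono (Set.subset_univ _))⟩
    have h2 : ⋂ n, (U \ Un n) = ∅ := by
      rw [← Set.diff_iUnion, hUndef, Set.iUnion_accumulate, Set.diff_self]
    rw [h2, measure_empty] at h1
    exact h1
  -- the `Lp`-norms of the differences
  have hnorm : ∀ n, eLpNorm (⇑(f - fn n)) p μ = (ν (U \ Un n)) ^ (1 / q) := by
    intro n
    have hcongr : ⇑(f - fn n) =ᵐ[μ] (U \ Un n).indicator f := by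
      filter_upwards [Lp.coeFn_sub f (fn n), hcfn n, hf] with x hsub h1 hx
      rw [hsub]
      simp only [Pi.sub_apply, h1]
      by_cases hx1 : x ∈ Un n
      · rw [Set.indicator_of_mem hx1,
          Set.indicator_of_notMem (fun h : x ∈ U \ Un n => h.2 hx1), sub_self]
      · by_cases hx2 : x ∈ U
        · rw [Set.indicator_of_notMem hx1,
            Set.indicator_of_mem (show x ∈ U \ Un n from ⟨hx2, hx1⟩), sub_zero]
        · rw [Set.indicator_of_notMem hx1,
            Set.indicator_of_notMem (fun h : x ∈ U \ Un n => hx2 h.1), hx hx2, sub_zero]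
    rw [eLpNorm_congr_ae hcongr,
      eLpNorm_indicator_eq_eLpNorm_restrict (hUm.diff (hUnm n)),
      eLpNorm_eq_lintegral_rpow_enorm_toReal hp0 hp2, hνdef,
      withDensity_apply _ (hUm.diff (hUnm n))]
    rfl
  have htendLp : Tendsto fn atTop (𝓝 f) := by
    rw [tendsto_iff_norm_sub_tendsto_zero]
    have heq : ∀ n, ‖fn n - f‖ = ((ν (U \ Un n)) ^ (1 / q)).toReal := by
      intro n
      rw [norm_sub_rev, Lp.norm_def, hnorm n]
    have h1 : Tendsto (fun n => (ν (U \ Un n)) ^ (1 / q)) atTop (𝓝 0) := by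
      have := ((ENNReal.continuous_rpow_const (y := 1 / q)).tendsto (0 : ℝ≥0∞)).comp hνtend
      have h0 : (0 : ℝ≥0∞) ^ (1 / q) = 0 :=
        ENNReal.zero_rpow_of_pos (by positivity)
      exact h0 ▸ this
    have h2 := (ENNReal.tendsto_toReal (show (0:ℝ≥0∞) ≠ ∞ by simp)).comp h1
    refine Tendsto.congr (fun n => (heq n).symm) ?_
    exact h2
  have hTtend : Tendsto (fun n => T (fn n)) atTop (𝓝 (T f)) :=
    (T.continuous.tendsto f).comp htendLp
  obtain ⟨ns, _, hns⟩ := (tendstoInMeasure_of_tendsto_Lp hTtend).exists_seq_tendsto_ae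
  filter_upwards [hns, ae_all_iff.mpr hTfn] with x hx hx0 hxU
  have hconst : (fun i => (T (fn (ns i))) x) = fun _ => (0:ℝ) :=
    funext fun i => hx0 (ns i) hxU
  rw [hconst] at hx
  exact (tendsto_nhds_unique hx tendsto_const_nhds)

/-- **The future of a countable union is the union of the futures**:
`𝓕(⋃_{A ∈ C} A) = ⋃_{A ∈ C} 𝓕(A)` (a.e.) for a positive operator on `L^p`, `p ∈ (1,∞)`. -/
theorem future_of_union_eq_union_of_futures
    {μ : Measure Ω} [SigmaFinite μ]
    {p : ℝ≥0∞} [Fact (1 ≤ p)] (hp1 : 1 < p) (hp2 : p ≠ ∞)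
    (T : Lp ℝ p μ →L[ℝ] Lp ℝ p μ) (hT : IsPositiveOp μ T)
    (𝓕 : Set Ω → Set Ω) (h𝓕 : ∀ A : Set Ω, IsFutureOf μ T A (𝓕 A))
    (C : Set (Set Ω)) (hCc : C.Countable) (hCm : ∀ A ∈ C, MeasurableSet A) :
    AESetEq μ (𝓕 (⋃₀ C)) (⋃ A ∈ C, 𝓕 A) := by
  have hp0 : p ≠ 0 := (lt_trans zero_lt_one hp1).ne'
  rcases C.eq_empty_or_nonempty with rfl | hCne
  · simp only [Set.sUnion_empty, Set.mem_empty_iff_false, Set.iUnion_of_empty, Set.iUnion_empty]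
    have h0 : μ (𝓕 (∅ : Set Ω)) = 0 := by
      have := (h𝓕 ∅).2.2 ∅ (isInvariantSet_empty T) (by simp [AESub])
      simpa [AESub] using this
    unfold AESetEq
    rw [Set.symmDiff_def]
    apply measure_union_null
    · exact measure_mono_null Set.diff_subset h0
    · simp
  · obtain ⟨g, rfl⟩ := hCc.exists_eq_range hCne
    rw [Set.sUnion_range, Set.biUnion_range]
    set W : Set Ω := ⋃ n, g n with hWdef
    set V : Set Ω := ⋃ n, 𝓕 (g n) with hVdef
    have hVinv : IsInvariantSet μ T V :=
      isInvariantSet_iUnion hp0 hp2 T _ (fun n => (h𝓕 (g n)).1)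
    have h1 : μ (𝓕 W \ V) = 0 := by
      apply (h𝓕 W).2.2 V hVinv
      apply measure_mono_null (t := ⋃ n, (g n \ 𝓕 (g n)))
      · intro x hx
        obtain ⟨n, hn⟩ := Set.mem_iUnion.mp hx.1
        exact Set.mem_iUnion.mpr ⟨n, hn, fun h => hx.2 (Set.mem_iUnion.mpr ⟨n, h⟩)⟩
      · exact measure_iUnion_null_iff.mpr fun n => (h𝓕 (g n)).2.1
    have h2 : μ (V \ 𝓕 W) = 0 := by
      rw [hVdef, Set.iUnion_diff]
      apply measure_iUnion_null_iff.mpr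
      intro n
      apply (h𝓕 (g n)).2.2 _ (h𝓕 W).1
      exact measure_mono_null
        (Set.diff_subset_diff_left (Set.subset_iUnion g n)) (h𝓕 W).2.1
    unfold AESetEq
    rw [Set.symmDiff_def]
    exact measure_union_null h1 h2
end

section
/- Let $F(u)=\varphi(u)Tu-\gamma u$ with $T$ a positive bounded operator on $L^\infty$, $\gamma\in L^\infty$, and $\varphi$ locally Lipschitz with $\varphi\geq 0$ on $[0,1]$. Then $F$ is cooperative on $\Delta\times L^\infty$: for $u\in\Delta$, $v\in L^\infty$ with $u\leq v$ and any positive continuous linear functional $\nu$ on $L^\infty$ with $\langle\nu, u-v\rangle = 0$, one has $\langle\nu, F(u)-F(v)\rangle \leq 0$. -/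
open MeasureTheory ENNReal NNReal

/-- For `f ∈ L^∞`, almost everywhere `‖f x‖ ≤ ‖f‖`. -/
lemma aux_ae_norm_le {Ω : Type*} [MeasurableSpace Ω] {μ : Measure Ω}
    (f : Lp ℝ ∞ μ) : ∀ᵐ x ∂μ, ‖f x‖ ≤ ‖f‖ := by
  have h := enorm_ae_le_eLpNormEssSup (⇑f) μ
  have hlt : eLpNormEssSup (⇑f) μ < ∞ := by
    have := Lp.eLpNorm_lt_top f
    rwa [eLpNorm_exponent_top] at this
  filter_upwards [h] with x hx
  have : ((‖f x‖₊ : ℝ≥0∞)).toReal ≤ (eLpNormEssSup (⇑f) μ).toReal :=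
    ENNReal.toReal_mono hlt.ne hx
  simpa [Lp.norm_def, eLpNorm_exponent_top] using this

/-- A locally Lipschitz real function is Lipschitz on every compact set. -/
lemma aux_locallyLipschitz_compact {f : ℝ → ℝ} (hf : LocallyLipschitz f)
    {s : Set ℝ} (hs : IsCompact s) : ∃ K : ℝ≥0, LipschitzOnWith K f s := by
  have hfc : Continuous f := hf.continuous
  rcases s.eq_empty_or_nonempty with rfl | hne
  · exact ⟨0, lipschitzOnWith_empty 0 f⟩
  choose K t ht hlip using hf
  have hball : ∀ x : ℝ, ∃ ε > 0, Metric.ball x ε ⊆ t x := fun x =>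
    Metric.mem_nhds_iff.mp (ht x)
  choose ε hε hsub using hball
  obtain ⟨F, hFs, hcov⟩ := hs.elim_nhds_subcover (fun x => Metric.ball x (ε x / 2))
    (fun x _ => Metric.ball_mem_nhds x (by have := hε x; positivity))
  have hFne : F.Nonempty := by
    obtain ⟨y, hy⟩ := hne
    rcases Set.mem_iUnion₂.mp (hcov hy) with ⟨x, hx, _⟩
    exact ⟨x, hx⟩
  set δ : ℝ := F.inf' hFne (fun x => ε x / 2) with hδdef
  have hδpos : 0 < δ := by
    rw [hδdef, Finset.lt_inf'_iff]
    intro b _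
    have := hε b; positivity
  obtain ⟨C, hC⟩ := hs.exists_bound_of_continuousOn hfc.continuousOn
  have hC0 : 0 ≤ C := le_trans (norm_nonneg _) (hC hne.choose hne.choose_spec)
  refine ⟨F.sup K ⊔ Real.toNNReal (2 * C / δ), LipschitzOnWith.of_dist_le_mul ?_⟩
  intro y hy z hz
  have hKle : ((F.sup K : ℝ≥0) : ℝ) ≤ ((F.sup K ⊔ Real.toNNReal (2 * C / δ) : ℝ≥0) : ℝ) := by
    exact_mod_cast le_sup_left
  by_cases hd : dist y z < δ
  · rcases Set.mem_iUnion₂.mp (hcov hy) with ⟨x, hxF, hyx⟩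
    have hδx : δ ≤ ε x / 2 := Finset.inf'_le _ hxF
    have hyx' : y ∈ Metric.ball x (ε x) := by
      rw [Metric.mem_ball] at hyx ⊢
      have := hε x; linarith
    have hzx : z ∈ Metric.ball x (ε x) := by
      rw [Metric.mem_ball] at hyx ⊢
      calc dist z x ≤ dist z y + dist y x := dist_triangle _ _ _
        _ < δ + ε x / 2 := by rw [dist_comm z y]; linarith
        _ ≤ ε x := by linarith
    have hl : LipschitzOnWith (K x) f (Metric.ball x (ε x)) := (hlip x).mono (hsub x)
    have h1 : dist (f y) (f z) ≤ (K x : ℝ) * dist y z := hl.dist_le_mul y hyx' z hzx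
    have h2 : ((K x : ℝ≥0) : ℝ) ≤ ((F.sup K : ℝ≥0) : ℝ) := by
      exact_mod_cast Finset.le_sup hxF
    calc dist (f y) (f z) ≤ (K x : ℝ) * dist y z := h1
      _ ≤ ((F.sup K ⊔ Real.toNNReal (2 * C / δ) : ℝ≥0) : ℝ) * dist y z := by
          apply mul_le_mul_of_nonneg_right (le_trans h2 hKle) dist_nonneg
  · push_neg at hd
    have h2Cδ : ((Real.toNNReal (2 * C / δ) : ℝ≥0) : ℝ) = 2 * C / δ := by
      rw [Real.coe_toNNReal]
      positivity
    have hKle2 : 2 * C / δ ≤ ((F.sup K ⊔ Real.toNNReal (2 * C / δ) : ℝ≥0) : ℝ) :=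
      h2Cδ.symm.trans_le (NNReal.coe_le_coe.mpr le_sup_right)
    calc dist (f y) (f z) ≤ ‖f y‖ + ‖f z‖ := dist_le_norm_add_norm _ _
      _ ≤ 2 * C := by have := hC y hy; have := hC z hz; linarith
      _ = (2 * C / δ) * δ := by field_simp
      _ ≤ (2 * C / δ) * dist y z := by
          apply mul_le_mul_of_nonneg_left hd; positivity
      _ ≤ ((F.sup K ⊔ Real.toNNReal (2 * C / δ) : ℝ≥0) : ℝ) * dist y z :=
          mul_le_mul_of_nonneg_right hKle2 dist_nonneg

set_option maxHeartbeats 1000000 in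
/-- **`F` is cooperative on `Δ × L^∞`.**  With `F(u) = φ(u)·Tu − γ·u`, `T` positive bounded
on `L^∞`, `γ ∈ L^∞`, `φ` locally Lipschitz and `φ ≥ 0` on `[0,1]`: for `u ∈ Δ`,
`v ∈ L^∞` with `u ≤ v` and any positive continuous linear functional `ν` on `L^∞` with
`⟨ν, u−v⟩ = 0`, one has `⟨ν, F(u)−F(v)⟩ ≤ 0`. -/
theorem SIS_field_cooperative
    {Ω : Type*} [MeasurableSpace Ω] {μ : Measure Ω} [IsFiniteMeasure μ] (hμ : μ ≠ 0)
    (T : Lp ℝ ∞ μ →L[ℝ] Lp ℝ ∞ μ) (hT : ∀ f : Lp ℝ ∞ μ, 0 ≤ f → 0 ≤ T f)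
    (γ : Lp ℝ ∞ μ)
    (φ : ℝ → ℝ) (hφlip : LocallyLipschitz φ)
    (hφnn : ∀ r ∈ Set.Icc (0:ℝ) 1, 0 ≤ φ r)
    (F : Lp ℝ ∞ μ → Lp ℝ ∞ μ)
    (hF : ∀ w : Lp ℝ ∞ μ, ⇑(F w) =ᵐ[μ] fun x => φ (w x) * (T w) x - γ x * w x)
    (u v : Lp ℝ ∞ μ) (hu : ∀ᵐ x ∂μ, u x ∈ Set.Icc (0:ℝ) 1) (huv : u ≤ v)
    (ν : Lp ℝ ∞ μ →L[ℝ] ℝ) (hν : ∀ f : Lp ℝ ∞ μ, 0 ≤ f → 0 ≤ ν f)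
    (hzero : ν (u - v) = 0) :
    ν (F u - F v) ≤ 0 := by
  -- Lipschitz constant of φ on a compact interval containing the essential ranges
  set M : ℝ := 1 ⊔ ‖v‖ with hM
  have hM1 : (1:ℝ) ≤ M := le_sup_left
  have hMv : ‖v‖ ≤ M := le_sup_right
  obtain ⟨K, hK⟩ := aux_locallyLipschitz_compact hφlip (isCompact_Icc (a := -M) (b := M))
  -- the comparison constant
  set c : ℝ := (K : ℝ) * ‖T v‖ + ‖γ‖ with hc
  have hc0 : 0 ≤ c := by rw [hc]; positivity
  -- pointwise a.e. facts
  have huvae : ⇑u ≤ᵐ[μ] ⇑v := (Lp.coeFn_le u v).2 huv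
  have hTuv : ⇑(T u) ≤ᵐ[μ] ⇑(T v) := by
    have h0 : (0 : Lp ℝ ∞ μ) ≤ T (v - u) := hT _ (sub_nonneg.mpr huv)
    have h1 : T u ≤ T v := by
      have := sub_nonneg.mp (by rwa [map_sub] at h0)
      exact this
    exact (Lp.coeFn_le _ _).2 h1
  -- the key comparison: F u - F v ≤ c • (v - u)
  have hcomp : F u - F v ≤ c • (v - u) := by
    refine (Lp.coeFn_le _ _).1 ?_
    filter_upwards [hF u, hF v, Lp.coeFn_sub (F u) (F v), Lp.coeFn_smul c (v - u),
      Lp.coeFn_sub v u, hu, huvae, hTuv, aux_ae_norm_le v, aux_ae_norm_le γ,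
      aux_ae_norm_le (T v)] with x hFu hFv hsub hsmul hsubvu hux huvx hTx hvx hγx hTvx
    have hsmul' : (c • (v - u)) x = c * (v x - u x) := by
      rw [hsmul]
      simp only [Pi.smul_apply, smul_eq_mul]
      rw [hsubvu]
      simp
    rw [hsub, Pi.sub_apply, hFu, hFv, hsmul']
    -- rename for clarity
    set a := u x
    set b := v x
    have ha0 : 0 ≤ a := hux.1
    have ha1 : a ≤ 1 := hux.2
    have hab : a ≤ b := huvx
    have hbM : -M ≤ b ∧ b ≤ M :=
      abs_le.mp (le_trans (by simpa [Real.norm_eq_abs] using hvx) hMv)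
    have haM : a ∈ Set.Icc (-M) M := ⟨by linarith, by linarith⟩
    have hbM' : b ∈ Set.Icc (-M) M := ⟨hbM.1, hbM.2⟩
    have hlipab : |φ a - φ b| ≤ (K : ℝ) * (b - a) := by
      have := hK.dist_le_mul a haM b hbM'
      rw [Real.dist_eq, Real.dist_eq] at this
      calc |φ a - φ b| ≤ (K : ℝ) * |a - b| := this
        _ = (K : ℝ) * (b - a) := by rw [abs_sub_comm, abs_of_nonneg (by linarith)]
    have hφa : 0 ≤ φ a := hφnn a ⟨ha0, ha1⟩
    have hst : (T u) x ≤ (T v) x := hTx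
    have hTvb : |(T v) x| ≤ ‖T v‖ := by simpa [Real.norm_eq_abs] using hTvx
    have hγb : |γ x| ≤ ‖γ‖ := by simpa [Real.norm_eq_abs] using hγx
    obtain ⟨hd1, hd2⟩ := abs_le.mp hlipab
    obtain ⟨hT1, hT2⟩ := abs_le.mp hTvb
    obtain ⟨hg1, hg2⟩ := abs_le.mp hγb
    have hK0 : (0:ℝ) ≤ K := K.coe_nonneg
    nlinarith [mul_nonneg hφa (sub_nonneg.mpr hst),
      mul_nonneg (by linarith : (0:ℝ) ≤ (K:ℝ) * (b - a) - (φ a - φ b))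
        (by linarith : (0:ℝ) ≤ ‖T v‖ + (T v) x),
      mul_nonneg (by linarith : (0:ℝ) ≤ (K:ℝ) * (b - a) + (φ a - φ b))
        (by linarith : (0:ℝ) ≤ ‖T v‖ - (T v) x),
      mul_nonneg (by linarith : (0:ℝ) ≤ ‖γ‖ - γ x) (by linarith : (0:ℝ) ≤ b - a),
      mul_nonneg (by linarith : (0:ℝ) ≤ ‖γ‖ + γ x) (by linarith : (0:ℝ) ≤ b - a)]
  -- conclude using positivity of ν
  have h1 : 0 ≤ ν (c • (v - u) - (F u - F v)) := hν _ (sub_nonneg.mpr hcomp)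
  rw [map_sub] at h1
  have h2 : ν (c • (v - u)) = 0 := by
    have hνvu : ν (v - u) = 0 := by rw [← neg_sub u v, map_neg, hzero, neg_zero]
    rw [ν.map_smul, hνvu, smul_zero]
  linarith
end

section
/- Under Assumption 1, the semi-flow of the SIS equation is order-preserving: if $h_1\leq h_2$ are elements of $\Delta$, then $\phi(t,h_1)\leq\phi(t,h_2)$ for all $t\in\mathbb{R}_+$. Moreover, for $h\in\Delta$, the map $t\mapsto\phi(t,h)$ is non-decreasing (resp. non-increasing) if and only if $F(h)\geq 0$ (resp. $F(h)\leq 0$). -/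
set_option maxHeartbeats 1000000

open MeasureTheory ENNReal Set Filter Topology

section aux

lemma unif_lip {φ : ℝ → ℝ} (hφ : LocallyLipschitz φ) :
    ∃ L : ℝ, 0 ≤ L ∧ ∀ a ∈ Icc (0:ℝ) 1, ∀ b ∈ Icc (0:ℝ) 1, |φ a - φ b| ≤ L * |a - b| := by
  obtain ⟨c, hc⟩ := isCompact_Icc.exists_bound_of_continuousOn
    (hφ.continuous.continuousOn (s := Icc (0:ℝ) 1))
  choose K U hU hlip using hφ
  -- finite subcover by interiors
  obtain ⟨s, hs⟩ := isCompact_Icc.elim_finite_subcover (fun x => interior (U x))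
    (fun _ => isOpen_interior)
    (fun x _ => mem_iUnion.2 ⟨x, mem_interior_iff_mem_nhds.2 (hU x)⟩)
  -- Lebesgue number for the finite cover
  obtain ⟨δ, hδ0, hδ⟩ := lebesgue_number_lemma_of_metric (ι := {i // i ∈ s})
    (c := fun i => interior (U i.1)) isCompact_Icc (fun _ => isOpen_interior)
    (by intro x hx; obtain ⟨i, his, hxi⟩ := by simpa using hs hx
        exact mem_iUnion.2 ⟨⟨i, his⟩, hxi⟩)
  set L₀ : NNReal := s.sup K with hL₀
  set C : ℝ := max c 0 with hC
  refine ⟨max (L₀ : ℝ) (2 * C / δ), le_max_of_le_left L₀.coe_nonneg, ?_⟩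
  intro a ha b hb
  rcases lt_or_ge (dist b a) δ with hab | hab
  · obtain ⟨i, hi⟩ := hδ a ha
    have hbmem : b ∈ U i.1 := interior_subset (hi (by simpa [Metric.mem_ball] using hab))
    have hamem : a ∈ U i.1 := interior_subset (hi (Metric.mem_ball_self hδ0))
    have := (hlip i.1).dist_le_mul a hamem b hbmem
    have hKle : (K i.1 : ℝ) ≤ (L₀ : ℝ) := by
      exact_mod_cast NNReal.coe_le_coe.2 (Finset.le_sup i.2)
    calc |φ a - φ b| = dist (φ a) (φ b) := (Real.dist_eq _ _).symm
      _ ≤ (K i.1 : ℝ) * dist a b := this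
      _ ≤ (L₀ : ℝ) * |a - b| := by
          rw [Real.dist_eq]
          exact mul_le_mul_of_nonneg_right hKle (abs_nonneg _)
      _ ≤ max (L₀ : ℝ) (2 * C / δ) * |a - b| :=
          mul_le_mul_of_nonneg_right (le_max_left _ _) (abs_nonneg _)
  · have h1 : |φ a| ≤ C := le_trans (by simpa [Real.norm_eq_abs] using hc a ha) (le_max_left _ _)
    have h2 : |φ b| ≤ C := le_trans (by simpa [Real.norm_eq_abs] using hc b hb) (le_max_left _ _)
    have hC0 : 0 ≤ C := le_max_right _ _
    have hd : δ ≤ |a - b| := by rwa [Real.dist_eq, abs_sub_comm] at hab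
    have : |φ a - φ b| ≤ 2 * C := by
      calc |φ a - φ b| ≤ |φ a| + |φ b| := abs_sub _ _
        _ ≤ 2 * C := by linarith
    calc |φ a - φ b| ≤ 2 * C := this
      _ = (2 * C / δ) * δ := by field_simp
      _ ≤ (2 * C / δ) * |a - b| := by
          exact mul_le_mul_of_nonneg_left hd (by positivity)
      _ ≤ max (L₀ : ℝ) (2 * C / δ) * |a - b| :=
          mul_le_mul_of_nonneg_right (le_max_right _ _) (abs_nonneg _)


section helpers
variable {Ω : Type*} [MeasurableSpace Ω] {μ : Measure Ω} [IsFiniteMeasure μ]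

omit [IsFiniteMeasure μ] in
lemma linf_ae_abs_le_norm (f : Lp ℝ ∞ μ) : ∀ᵐ x ∂μ, |f x| ≤ ‖f‖ := by
  filter_upwards [MeasureTheory.ae_le_eLpNormEssSup (f := ⇑f) (μ := μ)] with x hx
  have h1 : (‖f x‖₊ : ℝ≥0∞) ≤ eLpNorm (⇑f) ∞ μ := by
    rw [eLpNorm_exponent_top]; exact_mod_cast hx
  have h2 := ENNReal.toReal_mono (Lp.eLpNorm_ne_top f) h1
  simpa [Lp.norm_def, Real.norm_eq_abs] using h2

lemma linf_norm_le_of_ae {f : Lp ℝ ∞ μ} {C : ℝ} (hC : 0 ≤ C)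
    (h : ∀ᵐ x ∂μ, |f x| ≤ C) : ‖f‖ ≤ C := by
  have := Lp.norm_le_of_ae_bound (f := f) hC (by simpa [Real.norm_eq_abs] using h)
  simpa using this

theorem sis_comparison
    (T : Lp ℝ ∞ μ →L[ℝ] Lp ℝ ∞ μ) (hT : ∀ f : Lp ℝ ∞ μ, 0 ≤ f → 0 ≤ T f)
    (γ : Lp ℝ ∞ μ) (hγ : ∀ᵐ x ∂μ, 0 < γ x)
    (φ : ℝ → ℝ) (hφnn : ∀ r ∈ Icc (0:ℝ) 1, 0 ≤ φ r)
    (hφC : ∃ CL : ℝ × ℝ, 0 ≤ CL.1 ∧ 0 ≤ CL.2 ∧ (∀ a ∈ Icc (0:ℝ) 1, |φ a| ≤ CL.1) ∧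
      ∀ a ∈ Icc (0:ℝ) 1, ∀ b ∈ Icc (0:ℝ) 1, |φ a - φ b| ≤ CL.2 * |a - b|)
    (F : Lp ℝ ∞ μ → Lp ℝ ∞ μ)
    (hF : ∀ w : Lp ℝ ∞ μ, ⇑(F w) =ᵐ[μ] fun x => φ (w x) * (T w) x - γ x * w x)
    (u v : ℝ → Lp ℝ ∞ μ) (du dv : ℝ → Lp ℝ ∞ μ)
    (hu1 : ∀ t, 0 ≤ t → ∀ᵐ x ∂μ, u t x ∈ Set.Icc (0:ℝ) 1)
    (hv1 : ∀ t, 0 ≤ t → ∀ᵐ x ∂μ, v t x ∈ Set.Icc (0:ℝ) 1)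
    (hud : ∀ t, 0 ≤ t → HasDerivWithinAt u (du t) (Set.Ici 0) t)
    (hvd : ∀ t, 0 ≤ t → HasDerivWithinAt v (dv t) (Set.Ici 0) t)
    (hdu : ∀ t, 0 ≤ t → du t ≤ F (u t))
    (hdv : ∀ t, 0 ≤ t → F (v t) ≤ dv t)
    (h0 : u 0 ≤ v 0) :
    ∀ t, 0 ≤ t → u t ≤ v t := by
  obtain ⟨⟨C, L⟩, hC0, hL0, hC, hL⟩ := hφC
  set K : ℝ := (C + L) * ‖T‖ with hKdef
  set M : ℝ := L * ‖T‖ + ‖γ‖ with hMdef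
  have hK0 : 0 ≤ K := mul_nonneg (by linarith) (norm_nonneg _)
  have hM0 : 0 ≤ M := add_nonneg (mul_nonneg hL0 (norm_nonneg _)) (norm_nonneg _)
  set w : ℝ → Lp ℝ ∞ μ := fun t => u t - v t with hwdef
  set g : ℝ → ℝ := fun t => ‖w t ⊔ 0‖ with hgdef
  have hg0 : ∀ t, 0 ≤ g t := fun t => norm_nonneg _
  -- positive part pointwise bound
  have hwp_ae : ∀ t, ∀ᵐ x ∂μ, (w t ⊔ 0) x = max (w t x) 0 := by
    intro t
    filter_upwards [Lp.coeFn_sup (w t) 0, Lp.coeFn_zero ℝ ∞ μ] with x h1 h2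
    rw [h1, Pi.sup_apply, h2, Pi.zero_apply] <;> rfl
  have hwp_le : ∀ t, ∀ᵐ x ∂μ, max (w t x) 0 ≤ g t := by
    intro t
    filter_upwards [hwp_ae t, linf_ae_abs_le_norm (w t ⊔ 0)] with x h1 h2
    calc max (w t x) 0 = |(w t ⊔ 0) x| := by rw [h1]; exact (abs_of_nonneg (le_max_right _ _)).symm
      _ ≤ g t := h2
  -- key cooperative estimate
  have key : ∀ t, 0 ≤ t → ∀ᵐ x ∂μ,
      (F (u t)) x - (F (v t)) x ≤ K * g t + M * max (-(w t x)) 0 := by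
    intro t ht
    have hTw : T (w t) ≤ T (w t ⊔ 0) := by
      have h2 := hT _ (sub_nonneg.2 (le_sup_left : w t ≤ w t ⊔ 0))
      rw [map_sub] at h2
      exact sub_nonneg.1 h2
    have hTw_ae : ⇑(T (w t)) ≤ᵐ[μ] ⇑(T (w t ⊔ 0)) := (Lp.coeFn_le _ _).2 hTw
    have hnvt : ‖v t‖ ≤ 1 := by
      apply linf_norm_le_of_ae zero_le_one
      filter_upwards [hv1 t ht] with x hx
      rw [abs_le]; exact ⟨by linarith [hx.1], hx.2⟩
    have hTwp_norm : ‖T (w t ⊔ 0)‖ ≤ ‖T‖ * g t := T.le_opNorm _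
    have hTv_norm : ‖T (v t)‖ ≤ ‖T‖ := by
      calc ‖T (v t)‖ ≤ ‖T‖ * ‖v t‖ := T.le_opNorm _
        _ ≤ ‖T‖ * 1 := mul_le_mul_of_nonneg_left hnvt (norm_nonneg _)
        _ = ‖T‖ := mul_one _
    filter_upwards [hF (u t), hF (v t), hu1 t ht, hv1 t ht, hγ, linf_ae_abs_le_norm γ,
      hTw_ae, linf_ae_abs_le_norm (T (w t ⊔ 0)), linf_ae_abs_le_norm (T (v t)),
      hwp_le t, Lp.coeFn_sub (u t) (v t), Lp.coeFn_sub (T (u t)) (T (v t))]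
      with x hFu hFv hux hvx hγx hγn hTwx hTwpx hTvx hwptx hsubx hTsubx
    have hwx : w t x = u t x - v t x := by
      exact hsubx
    have hTwt : (T (w t)) x = (T (u t)) x - (T (v t)) x := by
      have h1 : T (w t) = T (u t) - T (v t) := map_sub T _ _
      rw [h1]; simpa [Pi.sub_apply] using hTsubx
    rw [hFu, hFv]
    set a := u t x with ha
    set b := v t x with hb
    set Tu := (T (u t)) x
    set Tv := (T (v t)) x
    set Twp := (T (w t ⊔ 0)) x
    have hTwb : Tu - Tv ≤ ‖T‖ * g t := by
      rw [← hTwt]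
      calc (T (w t)) x ≤ Twp := hTwx
        _ ≤ |Twp| := le_abs_self _
        _ ≤ ‖T (w t ⊔ 0)‖ := hTwpx
        _ ≤ ‖T‖ * g t := hTwp_norm
    have hTvb : |Tv| ≤ ‖T‖ := le_trans hTvx hTv_norm
    have hφa0 : 0 ≤ φ a := hφnn a hux
    have hφaC : φ a ≤ C := le_trans (le_abs_self _) (hC a hux)
    have hablip : |φ a - φ b| ≤ L * |a - b| := hL a hux b hvx
    have habgw : |a - b| ≤ g t + max (-(w t x)) 0 := by
      rw [abs_sub_le_iff]
      constructor
      · calc a - b ≤ max (a - b) 0 := le_max_left _ _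
          _ = max (w t x) 0 := by rw [hwx]
          _ ≤ g t := hwptx
          _ ≤ g t + max (-(w t x)) 0 := le_add_of_nonneg_right (le_max_right _ _)
      · calc b - a ≤ max (b - a) 0 := le_max_left _ _
          _ = max (-(w t x)) 0 := by rw [hwx]; ring_nf
          _ ≤ g t + max (-(w t x)) 0 := le_add_of_nonneg_left (hg0 t)
    set wn := max (-(w t x)) 0 with hwn
    have hwn0 : 0 ≤ wn := le_max_right _ _
    -- bound the three pieces
    have hb1 : φ a * (Tu - Tv) ≤ C * (‖T‖ * g t) := by
      have h1 : φ a * (Tu - Tv) ≤ φ a * (‖T‖ * g t) :=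
        mul_le_mul_of_nonneg_left hTwb hφa0
      have h2 : φ a * (‖T‖ * g t) ≤ C * (‖T‖ * g t) :=
        mul_le_mul_of_nonneg_right hφaC
          (mul_nonneg (norm_nonneg _) (hg0 t))
      linarith
    have hb2 : (φ a - φ b) * Tv ≤ L * ‖T‖ * (g t + wn) := by
      calc (φ a - φ b) * Tv ≤ |(φ a - φ b) * Tv| := le_abs_self _
        _ = |φ a - φ b| * |Tv| := abs_mul _ _
        _ ≤ (L * |a - b|) * ‖T‖ := by
            exact mul_le_mul hablip hTvb (abs_nonneg _)
              (mul_nonneg hL0 (abs_nonneg _))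
        _ ≤ (L * (g t + wn)) * ‖T‖ := by
            have := mul_le_mul_of_nonneg_left habgw hL0
            exact mul_le_mul_of_nonneg_right this (norm_nonneg _)
        _ = L * ‖T‖ * (g t + wn) := by ring
    have hb3 : -(γ x * (a - b)) ≤ ‖γ‖ * wn := by
      rcases le_or_gt 0 (a - b) with hab | hab
      · have h1 : 0 ≤ γ x * (a - b) := mul_nonneg (le_of_lt hγx) hab
        have h2 : 0 ≤ ‖γ‖ * wn := mul_nonneg (norm_nonneg _) hwn0
        linarith
      · have h1 : wn = b - a := by
          rw [hwn, hwx, max_eq_left (by linarith)]; ring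
        have h2 : γ x ≤ ‖γ‖ := le_trans (le_abs_self _) hγn
        rw [h1]
        have h3 : 0 < b - a := by linarith
        have h4 := mul_le_mul_of_nonneg_right h2 h3.le
        linarith
    have hdecomp : φ a * Tu - γ x * a - (φ b * Tv - γ x * b)
        = φ a * (Tu - Tv) + (φ a - φ b) * Tv + -(γ x * (a - b)) := by ring
    rw [hdecomp, hKdef, hMdef]
    linarith [hb1, hb2, hb3]
  -- norm of v t is at most 1
  -- Gronwall argument
  have main : ∀ t, 0 ≤ t → g t = 0 := by
    intro t₀ ht₀
    have hcont : ContinuousOn g (Icc 0 t₀) := by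
      have hu : ContinuousOn u (Ici (0:ℝ)) := fun r hr => (hud r hr).continuousWithinAt
      have hv : ContinuousOn v (Ici (0:ℝ)) := fun r hr => (hvd r hr).continuousWithinAt
      have hw : ContinuousOn w (Ici (0:ℝ)) := hu.sub hv
      exact (((hw.sup continuousOn_const).norm).mono Icc_subset_Ici_self)
    have hgron := le_gronwallBound_of_liminf_deriv_right_le (f := g)
      (f' := fun t => K * g t) (δ := 0) (K := K) (ε := 0) (a := 0) (b := t₀) hcont
      ?_ ?_ (fun x _ => le_of_eq (add_zero _).symm)
    · have := hgron t₀ (by simp [ht₀])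
      rw [gronwallBound_ε0_δ0] at this
      exact le_antisymm this (hg0 t₀)
    · -- Dini derivative estimate
      intro t ht r hr
      have ht0 : (0:ℝ) ≤ t := ht.1
      have hsub2 : Ioi t ⊆ Ici (0:ℝ) \ {t} :=
        fun z hz => ⟨le_trans ht0 (le_of_lt hz), ne_of_gt hz⟩
      have hsu : Tendsto (slope u t) (𝓝[>] t) (𝓝 (du t)) :=
        ((hasDerivWithinAt_iff_tendsto_slope).1 (hud t ht0)).mono_left
          (nhdsWithin_mono t hsub2)
      have hsv : Tendsto (slope v t) (𝓝[>] t) (𝓝 (dv t)) :=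
        ((hasDerivWithinAt_iff_tendsto_slope).1 (hvd t ht0)).mono_left
          (nhdsWithin_mono t hsub2)
      have hD : Tendsto
          (fun z => ‖(slope u t z - slope v t z) - (du t - dv t)‖) (𝓝[>] t) (𝓝 0) := by
        have h1 := (hsu.sub hsv).sub_const (du t - dv t)
        rw [sub_self] at h1
        simpa using h1.norm
      have hr' : K * g t < r := hr
      have hev1 : ∀ᶠ z in 𝓝[>] t,
          ‖(slope u t z - slope v t z) - (du t - dv t)‖ < r - K * g t :=
        hD.eventually_lt_const (by linarith)
      have hMpos : (0:ℝ) < M + 1 := by linarith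
      have hev2 : ∀ᶠ z in 𝓝[>] t, z < t + (M + 1)⁻¹ :=
        Filter.eventually_of_mem
          (nhdsWithin_le_nhds (Iio_mem_nhds (by simp [inv_pos.2 hMpos])))
          (fun z hz => hz)
      have hev3 : ∀ᶠ z in 𝓝[>] t, t < z := eventually_mem_nhdsWithin
      refine ((hev1.and (hev2.and hev3)).frequently).mono ?_
      rintro z ⟨he, hz2, hz3⟩
      set σ : Lp ℝ ∞ μ := slope u t z - slope v t z with hσdef
      set e : ℝ := ‖σ - (du t - dv t)‖ with hedef
      have he0 : 0 ≤ e := norm_nonneg _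
      have hs : 0 < z - t := sub_pos.2 hz3
      have hsM : (z - t) * M ≤ 1 := by
        have h1 : (z - t) * (M + 1) < (M + 1)⁻¹ * (M + 1) :=
          mul_lt_mul_of_pos_right (by linarith) hMpos
        rw [inv_mul_cancel₀ (ne_of_gt hMpos)] at h1
        linarith
      have hwz : w z = w t + (z - t) • σ := by
        have h1 : (z - t) • slope u t z = u z - u t := by
          rw [sub_smul_slope, vsub_eq_sub]
        have h2 : (z - t) • slope v t z = v z - v t := by
          rw [sub_smul_slope, vsub_eq_sub]
        simp only [hσdef, smul_sub, h1, h2, hwdef]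
        abel
      have haebound : ∀ᵐ x ∂μ, |(w z ⊔ 0) x| ≤ g t + (z - t) * (K * g t + e) := by
        filter_upwards [key t ht0, (Lp.coeFn_le _ _).2 (hdu t ht0),
          (Lp.coeFn_le _ _).2 (hdv t ht0), hwp_ae z, hwp_le t,
          Lp.coeFn_add (w t) ((z - t) • σ), Lp.coeFn_smul (z - t) σ,
          linf_ae_abs_le_norm (σ - (du t - dv t)),
          Lp.coeFn_sub σ (du t - dv t), Lp.coeFn_sub (du t) (dv t)]
          with x hkey hhdu hhdv hzsup hwtle hadd hsmul hDx hD1 hD2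
        have hwzx : w z x = w t x + (z - t) * σ x := by
          rw [hwz, hadd]
          simp only [Pi.add_apply, hsmul, Pi.smul_apply, smul_eq_mul]
        have hσx : σ x ≤ du t x - dv t x + e := by
          have h1 : (σ - (du t - dv t)) x = σ x - (du t x - dv t x) := by
            rw [hD1]; simp only [Pi.sub_apply, hD2]
          rw [h1] at hDx
          have := abs_le.1 hDx
          linarith [this.2]
        have hub : w z x ≤ g t + (z - t) * (K * g t + e) := by
          have hσx2 : σ x ≤ K * g t + M * max (-(w t x)) 0 + e := by
            have : du t x - dv t x ≤ (F (u t)) x - (F (v t)) x := by linarith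
            linarith
          have hmul := mul_le_mul_of_nonneg_left hσx2 hs.le
          rcases le_or_gt 0 (w t x) with hwt | hwt
          · have hwn : max (-(w t x)) 0 = 0 := max_eq_right (by linarith)
            rw [hwn] at hmul
            have hwtg : w t x ≤ g t := le_trans (le_max_left _ _) hwtle
            linarith [hwzx, hmul]
          · have hwn : max (-(w t x)) 0 = -(w t x) := max_eq_left (by linarith)
            rw [hwn] at hmul
            have h3 : (-(w t x)) * ((z - t) * M - 1) ≤ 0 :=
              mul_nonpos_of_nonneg_of_nonpos (by linarith) (by linarith [hsM])
            linarith [hwzx, hmul, h3, hg0 t]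
        have hrhs : 0 ≤ g t + (z - t) * (K * g t + e) :=
          add_nonneg (hg0 t) (mul_nonneg hs.le
            (add_nonneg (mul_nonneg hK0 (hg0 t)) he0))
        rw [hzsup, abs_of_nonneg (le_sup_right (a := w z x) (b := (0:ℝ)))]
        exact sup_le hub hrhs
      have hgz : g z ≤ g t + (z - t) * (K * g t + e) := by
        have hrhs : 0 ≤ g t + (z - t) * (K * g t + e) :=
          add_nonneg (hg0 t) (mul_nonneg hs.le
            (add_nonneg (mul_nonneg hK0 (hg0 t)) he0))
        exact linf_norm_le_of_ae hrhs haebound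
      have hfinal : (z - t)⁻¹ * (g z - g t) ≤ K * g t + e := by
        rw [inv_mul_le_iff₀ hs]
        linarith
      linarith
    · -- g 0 ≤ 0
      have hw0 : w 0 ⊔ 0 = 0 := sup_eq_right.2 (sub_nonpos.2 h0)
      simp [hgdef, hw0]
  intro t ht
  have : w t ⊔ 0 = 0 := by
    have := main t ht
    simpa [hgdef] using norm_eq_zero.mp this
  exact sub_nonpos.1 (sup_eq_right.1 this)

end helpers


section dev
variable {Ω : Type*} [MeasurableSpace Ω] {μ : Measure Ω} [IsFiniteMeasure μ]

omit [IsFiniteMeasure μ] in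
lemma lp_smul_nonneg {f : Lp ℝ ∞ μ} {c : ℝ} (hc : 0 ≤ c) (hf : 0 ≤ f) : 0 ≤ c • f := by
  rw [← Lp.coeFn_nonneg] at hf ⊢
  filter_upwards [hf, Lp.coeFn_smul c f] with x h1 h2
  simp only [h2, Pi.smul_apply, smul_eq_mul, Pi.zero_apply]
  exact mul_nonneg hc (by simpa using h1)

omit [IsFiniteMeasure μ] in
lemma lp_smul_nonpos {f : Lp ℝ ∞ μ} {c : ℝ} (hc : 0 ≤ c) (hf : f ≤ 0) : c • f ≤ 0 := by
  have := lp_smul_nonneg (f := -f) hc (by simpa using neg_nonneg.2 hf)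
  rw [smul_neg] at this
  simpa using neg_nonneg.1 this

end dev

/-- **Order preservation and monotonicity of the semi-flow** (Assumption 1).
If `h₁ ≤ h₂` in `Δ` then `φ(t,h₁) ≤ φ(t,h₂)` for all `t ≥ 0`; moreover, for `h ∈ Δ`,
`t ↦ φ(t,h)` is non-decreasing (resp. non-increasing) iff `F(h) ≥ 0` (resp. `F(h) ≤ 0`).
The semi-flow `Φ` of `u' = F(u)` is given together with its defining properties. -/
theorem semiflow_monotonicity
    {Ω : Type*} [MeasurableSpace Ω] {μ : Measure Ω} [IsFiniteMeasure μ] (hμ : μ ≠ 0)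
    {p : ℝ≥0∞} [Fact (1 ≤ p)] (hp1 : 1 < p) (hp2 : p ≠ ∞)
    (T : Lp ℝ ∞ μ →L[ℝ] Lp ℝ ∞ μ) (hT : ∀ f : Lp ℝ ∞ μ, 0 ≤ f → 0 ≤ T f)
    (Cp : ℝ≥0∞) (hCp : Cp ≠ ∞)
    (hTbound : ∀ f : Lp ℝ ∞ μ, eLpNorm (⇑(T f)) p μ ≤ Cp * eLpNorm (⇑f) p μ)
    (γ : Lp ℝ ∞ μ) (hγ : ∀ᵐ x ∂μ, 0 < γ x)
    (φ : ℝ → ℝ) (hφlip : LocallyLipschitz φ)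
    (hφnn : ∀ r ∈ Set.Icc (0:ℝ) 1, 0 ≤ φ r) (hφ1 : φ 1 = 0)
    (F : Lp ℝ ∞ μ → Lp ℝ ∞ μ)
    (hF : ∀ w : Lp ℝ ∞ μ, ⇑(F w) =ᵐ[μ] fun x => φ (w x) * (T w) x - γ x * w x)
    (Φ : ℝ → Lp ℝ ∞ μ → Lp ℝ ∞ μ)
    (hΦ : ∀ h : Lp ℝ ∞ μ, (∀ᵐ x ∂μ, h x ∈ Set.Icc (0:ℝ) 1) →
      (Φ 0 h = h) ∧
      (∀ t : ℝ, 0 ≤ t →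
        (∀ᵐ x ∂μ, (Φ t h) x ∈ Set.Icc (0:ℝ) 1) ∧
        HasDerivWithinAt (fun s => Φ s h) (F (Φ t h)) (Set.Ici 0) t) ∧
      (∀ τ : ℝ, ∀ u : ℝ → Lp ℝ ∞ μ, u 0 = h →
        (∀ t ∈ Set.Ico (0:ℝ) τ, HasDerivWithinAt u (F (u t)) (Set.Ico 0 τ) t) →
        ∀ t ∈ Set.Ico (0:ℝ) τ, u t = Φ t h)) :
    (∀ h₁ h₂ : Lp ℝ ∞ μ, (∀ᵐ x ∂μ, h₁ x ∈ Set.Icc (0:ℝ) 1) →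
      (∀ᵐ x ∂μ, h₂ x ∈ Set.Icc (0:ℝ) 1) → h₁ ≤ h₂ →
      ∀ t : ℝ, 0 ≤ t → Φ t h₁ ≤ Φ t h₂) ∧
    (∀ h : Lp ℝ ∞ μ, (∀ᵐ x ∂μ, h x ∈ Set.Icc (0:ℝ) 1) →
      ((∀ s t : ℝ, 0 ≤ s → s ≤ t → Φ s h ≤ Φ t h) ↔ 0 ≤ F h) ∧
      ((∀ s t : ℝ, 0 ≤ s → s ≤ t → Φ t h ≤ Φ s h) ↔ F h ≤ 0)) := by
  have hφC : ∃ CL : ℝ × ℝ, 0 ≤ CL.1 ∧ 0 ≤ CL.2 ∧ (∀ a ∈ Set.Icc (0:ℝ) 1, |φ a| ≤ CL.1) ∧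
      ∀ a ∈ Set.Icc (0:ℝ) 1, ∀ b ∈ Set.Icc (0:ℝ) 1, |φ a - φ b| ≤ CL.2 * |a - b| := by
    obtain ⟨L, hL0, hLl⟩ := unif_lip hφlip
    obtain ⟨c, hc⟩ := isCompact_Icc.exists_bound_of_continuousOn
      (hφlip.continuous.continuousOn (s := Set.Icc (0:ℝ) 1))
    exact ⟨(max c 0, L), le_max_right _ _, hL0,
      fun a ha => le_trans (by simpa [Real.norm_eq_abs] using hc a ha) (le_max_left _ _), hLl⟩
  have comp := sis_comparison T hT γ hγ φ hφnn hφC F hF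
  have part1 : ∀ h₁ h₂ : Lp ℝ ∞ μ, (∀ᵐ x ∂μ, h₁ x ∈ Set.Icc (0:ℝ) 1) →
      (∀ᵐ x ∂μ, h₂ x ∈ Set.Icc (0:ℝ) 1) → h₁ ≤ h₂ →
      ∀ t : ℝ, 0 ≤ t → Φ t h₁ ≤ Φ t h₂ := by
    intro h₁ h₂ m1 m2 hle t ht
    obtain ⟨f01, f1, -⟩ := hΦ h₁ m1
    obtain ⟨f02, f2, -⟩ := hΦ h₂ m2
    exact comp (fun t => Φ t h₁) (fun t => Φ t h₂)
      (fun t => F (Φ t h₁)) (fun t => F (Φ t h₂))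
      (fun t ht => (f1 t ht).1) (fun t ht => (f2 t ht).1)
      (fun t ht => (f1 t ht).2) (fun t ht => (f2 t ht).2)
      (fun t ht => le_rfl) (fun t ht => le_rfl)
      (by show Φ 0 h₁ ≤ Φ 0 h₂; rw [f01, f02]; exact hle) t ht
  refine ⟨part1, ?_⟩
  intro h hm
  obtain ⟨f0, fd, -⟩ := hΦ h hm
  have hmem : ∀ t, 0 ≤ t → ∀ᵐ x ∂μ, (Φ t h) x ∈ Set.Icc (0:ℝ) 1 := fun t ht => (fd t ht).1
  have hup : 0 ≤ F h → ∀ δ, 0 ≤ δ → h ≤ Φ δ h := by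
    intro hFh δ hδ
    exact comp (fun _ => h) (fun t => Φ t h) (fun _ => 0) (fun t => F (Φ t h))
      (fun t _ => hm) (fun t ht => hmem t ht)
      (fun t _ => hasDerivWithinAt_const t _ h)
      (fun t ht => (fd t ht).2)
      (fun t _ => hFh) (fun t _ => le_rfl)
      (le_of_eq f0.symm) δ hδ
  have hdown : F h ≤ 0 → ∀ δ, 0 ≤ δ → Φ δ h ≤ h := by
    intro hFh δ hδ
    exact comp (fun t => Φ t h) (fun _ => h) (fun t => F (Φ t h)) (fun _ => 0)
      (fun t ht => hmem t ht) (fun t _ => hm)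
      (fun t ht => (fd t ht).2)
      (fun t _ => hasDerivWithinAt_const t _ h)
      (fun t _ => le_rfl) (fun t _ => hFh)
      (le_of_eq f0) δ hδ
  have hshift : ∀ δ, 0 ≤ δ → ∀ r, 0 ≤ r →
      HasDerivWithinAt (fun s => Φ (s + δ) h) (F (Φ (r + δ) h)) (Set.Ici 0) r := by
    intro δ hδ r hr
    have hinner := (fd (r + δ) (by linarith)).2
    have houter : HasDerivWithinAt (fun x : ℝ => x + δ) 1 (Set.Ici 0) r :=
      ((hasDerivAt_id r).add_const δ).hasDerivWithinAt
    have hmaps : Set.MapsTo (fun x : ℝ => x + δ) (Set.Ici 0) (Set.Ici 0) := by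
      intro x hx
      simp only [Set.mem_Ici] at hx ⊢
      linarith
    have := HasDerivWithinAt.scomp r hinner houter hmaps
    rw [one_smul] at this
    exact this
  have hshiftmem : ∀ δ, 0 ≤ δ → ∀ r, 0 ≤ r →
      ∀ᵐ x ∂μ, (Φ (r + δ) h) x ∈ Set.Icc (0:ℝ) 1 :=
    fun δ hδ r hr => hmem (r + δ) (by linarith)
  have hd0 : HasDerivWithinAt (fun s => Φ s h) (F h) (Set.Ici 0) 0 := by
    have := (fd 0 le_rfl).2; rwa [f0] at this
  have hslope : Tendsto (slope (fun s => Φ s h) 0) (𝓝[>] 0) (𝓝 (F h)) :=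
    (hasDerivWithinAt_iff_tendsto_slope.1 hd0).mono_left
      (nhdsWithin_mono 0 (fun z hz => ⟨(Set.mem_Ioi.1 hz).le, ne_of_gt (Set.mem_Ioi.1 hz)⟩))
  constructor
  · constructor
    · intro hmono
      refine ge_of_tendsto hslope ?_
      filter_upwards [eventually_mem_nhdsWithin] with z hz
      have hz0 : (0:ℝ) < z := hz
      have hΦz : Φ 0 h ≤ Φ z h := hmono 0 z le_rfl hz0.le
      rw [slope_def_module]
      exact lp_smul_nonneg (by simp [inv_nonneg, hz0.le]) (sub_nonneg.2 hΦz)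
    · intro hFh s t hs hst
      have hδ : 0 ≤ t - s := by linarith
      have h2 := comp (fun r => Φ r h) (fun r => Φ (r + (t - s)) h)
        (fun r => F (Φ r h)) (fun r => F (Φ (r + (t - s)) h))
        (fun r hr => hmem r hr) (fun r hr => hshiftmem (t - s) hδ r hr)
        (fun r hr => (fd r hr).2) (fun r hr => hshift (t - s) hδ r hr)
        (fun r _ => le_rfl) (fun r _ => le_rfl)
        (by show Φ 0 h ≤ Φ (0 + (t - s)) h; rw [zero_add, f0]; exact hup hFh (t - s) hδ) s hs
      have h2' : Φ s h ≤ Φ (s + (t - s)) h := h2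
      have hst' : s + (t - s) = t := by ring
      rwa [hst'] at h2'
  · constructor
    · intro hanti
      refine le_of_tendsto hslope ?_
      filter_upwards [eventually_mem_nhdsWithin] with z hz
      have hz0 : (0:ℝ) < z := hz
      have hΦz : Φ z h ≤ Φ 0 h := hanti 0 z le_rfl hz0.le
      rw [slope_def_module]
      exact lp_smul_nonpos (by simp [inv_nonneg, hz0.le]) (sub_nonpos.2 hΦz)
    · intro hFh s t hs hst
      have hδ : 0 ≤ t - s := by linarith
      have h2 := comp (fun r => Φ (r + (t - s)) h) (fun r => Φ r h)
        (fun r => F (Φ (r + (t - s)) h)) (fun r => F (Φ r h))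
        (fun r hr => hshiftmem (t - s) hδ r hr) (fun r hr => hmem r hr)
        (fun r hr => hshift (t - s) hδ r hr) (fun r hr => (fd r hr).2)
        (fun r _ => le_rfl) (fun r _ => le_rfl)
        (by show Φ (0 + (t - s)) h ≤ Φ 0 h; rw [zero_add, f0]; exact hdown hFh (t - s) hδ) s hs
      have h2' : Φ (s + (t - s)) h ≤ Φ s h := h2
      have hst' : s + (t - s) = t := by ring
      rwa [hst'] at h2'

end aux
end
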